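/- For n ≡ 0 (mod 4), the honeycomb toroidal graph HTG(2, n, n/2) is isomorphic to the generalized Petersen graph GP(n, n/2 - 1). -/

import Mathlib

open SimpleGraph Finset

/-- A `k`-rainbow dominating function on a graph `G`: whenever `f v = ∅`,
every color appears on some neighbor of `v`. -/
def IsKRDF {V : Type*} (G : SimpleGraph V) (k : ℕ) (f : V → Finset (Fin k)) : Prop :=
  ∀ v, f v = ∅ → ∀ c : Fin k, ∃ u, G.Adj v u ∧ c ∈ f u

/-- The weight of a rainbow dominating function. -/
def rdfWeight {V : Type*} [Fintype V] {k : ℕ} (f : V → Finset (Fin k)) : ℕ :=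
  ∑ v, (f v).card

/-- The `k`-rainbow domination number of `G`. -/
noncomputable def rainbowDomNum {V : Type*} [Fintype V] (G : SimpleGraph V) (k : ℕ) : ℕ :=
  sInf {w | ∃ f, IsKRDF G k f ∧ rdfWeight f = w}

/-- One-directional adjacency relation of the honeycomb toroidal graph
`HTG(m,n,ℓ)`: vertical edges, horizontal edges and jumps. -/
def HTGRel (m n ℓ : ℕ) [NeZero m] [NeZero n]
    (x y : ZMod m × ZMod n) : Prop :=
  (y.1 = x.1 ∧ y.2 = x.2 + 1) ∨
  (x.1.val < m - 1 ∧ y.1 = x.1 + 1 ∧ y.2 = x.2 ∧ (x.1.val + 1) % 2 = x.2.val % 2) ∨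
  (x.1.val = m - 1 ∧ y.1 = 0 ∧ y.2 = x.2 + (ℓ : ZMod n) ∧ x.2.val % 2 = m % 2)

/-- The honeycomb toroidal graph `HTG(m,n,ℓ)` on vertex set `ZMod m × ZMod n`. -/
def HTG (m n ℓ : ℕ) [NeZero m] [NeZero n] : SimpleGraph (ZMod m × ZMod n) where
  Adj x y := x ≠ y ∧ (HTGRel m n ℓ x y ∨ HTGRel m n ℓ y x)
  symm := by constructor; rintro x y ⟨hne, h⟩; exact ⟨hne.symm, h.symm⟩
  loopless := by constructor; rintro x ⟨hne, -⟩; exact hne rfl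

/-- The generalized Petersen graph `GP(n,k)`: outer vertices `Sum.inl i`, inner
vertices `Sum.inr i`, with outer edges, spokes and inner edges. -/
def GP (n k : ℕ) : SimpleGraph (ZMod n ⊕ ZMod n) where
  Adj x y := x ≠ y ∧
    (match x, y with
     | Sum.inl i, Sum.inl j => j = i + 1 ∨ i = j + 1
     | Sum.inl i, Sum.inr j => i = j
     | Sum.inr i, Sum.inl j => i = j
     | Sum.inr i, Sum.inr j => j = i + (k : ZMod n) ∨ i = j + (k : ZMod n))
  symm := by
    constructor; rintro (i | i) (j | j) ⟨hne, h⟩ <;>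
      refine ⟨hne.symm, ?_⟩ <;> simp only at h ⊢ <;> tauto
  loopless := by constructor; rintro (i | i) ⟨hne, -⟩ <;> exact hne rfl

/-!
Keep the first column of `HTG(2, n, n/2)` as the outer cycle of `GP(n, n/2 - 1)` and send `v_{1,j}`
to the inner vertex `v_{t j}`, where `t j = twist (n/2) j = j + (n/2)(j + 1)` is `j` for odd `j`
and `j + n/2` for even `j`: this is the column-0 endpoint of the horizontal edge or jump at
`v_{1,j}`, so those edges become the spokes. When `4 ∣ n`, `h = n/2` satisfies `2h = 0` and
`h² = 0` in `ZMod n`; hence `t` is an involution with `t (j + 1) = t j - (h - 1)`, and the vertical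
cycle of the second column becomes the inner cycle of step `n/2 - 1`.
-/

section Twist

variable {R : Type*} [CommRing R] {h : R}

def twist (h j : R) : R := j + h * (j + 1)

theorem twist_involutive (hh : h + h = 0) (hsq : h * h = 0) : Function.Involutive (twist h) := by
  intro j
  unfold twist
  linear_combination (j + 1) * hh + (j + 1) * hsq

theorem twist_injective (hh : h + h = 0) (hsq : h * h = 0) : Function.Injective (twist h) :=
  (twist_involutive hh hsq).injective

theorem twist_add_one (hh : h + h = 0) (j : R) : twist h (j + 1) = twist h j - (h - 1) := by
  unfold twist
  linear_combination hh

theorem twist_eq_twist_add_iff (hh : h + h = 0) (hsq : h * h = 0) (a b : R) :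
    twist h b = twist h a + (h - 1) ↔ a = b + 1 := by
  calc twist h b = twist h a + (h - 1) ↔ twist h a = twist h (b + 1) := by
        rw [twist_add_one hh, eq_sub_iff_add_eq, eq_comm]
    _ ↔ a = b + 1 := (twist_injective hh hsq).eq_iff

def twistPerm (hh : h + h = 0) (hsq : h * h = 0) : Equiv.Perm R :=
  (twist_involutive hh hsq).toPerm

@[simp]
theorem twistPerm_apply (hh : h + h = 0) (hsq : h * h = 0) (j : R) :
    twistPerm hh hsq j = twist h j :=
  rfl

end Twist

section Half

variable {n : ℕ}

theorem natCast_half_add_self (hn : 2 ∣ n) : ((n / 2 : ℕ) : ZMod n) + (n / 2 : ℕ) = 0 := by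
  rw [← Nat.cast_add, ← two_mul, Nat.mul_div_cancel' hn, ZMod.natCast_self]

theorem natCast_half_mul_self (hn : 4 ∣ n) : ((n / 2 : ℕ) : ZMod n) * (n / 2 : ℕ) = 0 := by
  obtain ⟨t, rfl⟩ := hn
  rw [← Nat.cast_mul, ZMod.natCast_eq_zero_iff, show 4 * t / 2 = 2 * t by omega]
  exact ⟨t, by ring⟩

theorem natCast_half_mul_eq_ite [NeZero n] (hn : 2 ∣ n) (b : ZMod n) :
    ((n / 2 : ℕ) : ZMod n) * b = if b.val % 2 = 0 then 0 else ((n / 2 : ℕ) : ZMod n) := by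
  have hh := natCast_half_add_self hn
  conv_lhs => rw [← ZMod.natCast_zmod_val b, ← Nat.div_add_mod b.val 2]
  push_cast
  rcases Nat.mod_two_eq_zero_or_one b.val with hb | hb <;>
    simp only [hb, Nat.cast_zero, Nat.cast_one, ite_true, one_ne_zero, ite_false] <;>
    linear_combination ((b.val / 2 : ℕ) : ZMod n) * hh

theorem twist_half_eq_ite [NeZero n] (hn : 2 ∣ n) (b : ZMod n) :
    twist ((n / 2 : ℕ) : ZMod n) b = if b.val % 2 = 0 then b + (n / 2 : ℕ) else b := by
  have hh := natCast_half_add_self hn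
  rw [twist, mul_add, natCast_half_mul_eq_ite hn, mul_one]
  split_ifs
  · ring
  · linear_combination hh

theorem eq_twist_half_iff [NeZero n] (hn : 2 ∣ n) (a b : ZMod n) :
    a = twist ((n / 2 : ℕ) : ZMod n) b ↔
      (b = a ∧ a.val % 2 = 1) ∨ (a = b + (n / 2 : ℕ) ∧ b.val % 2 = 0) := by
  rw [twist_half_eq_ite hn]
  split_ifs <;> grind

end Half

section HTGAdjacency

variable {n ℓ : ℕ} [NeZero n] (a b : ZMod n)

theorem HTG_two_adj_zero_zero :
    (HTG 2 n ℓ).Adj (0, a) (0, b) ↔ a ≠ b ∧ (b = a + 1 ∨ a = b + 1) := by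
  simp [HTG, HTGRel]

theorem HTG_two_adj_one_one :
    (HTG 2 n ℓ).Adj (1, a) (1, b) ↔ a ≠ b ∧ (b = a + 1 ∨ a = b + 1) := by
  simp [HTG, HTGRel]

theorem HTG_two_adj_zero_one :
    (HTG 2 n ℓ).Adj (0, a) (1, b) ↔ (b = a ∧ a.val % 2 = 1) ∨ (a = b + ℓ ∧ b.val % 2 = 0) := by
  simp [HTG, HTGRel, show (1 : ZMod 2).val = 1 from rfl, eq_comm (a := 1)]

end HTGAdjacency

section GPAdjacency

variable {n k : ℕ} (a b : ZMod n)

theorem GP_adj_inl_inl : (GP n k).Adj (.inl a) (.inl b) ↔ a ≠ b ∧ (b = a + 1 ∨ a = b + 1) := by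
  simp [GP]

theorem GP_adj_inl_inr : (GP n k).Adj (.inl a) (.inr b) ↔ a = b := by
  simp [GP]

theorem GP_adj_inr_inr :
    (GP n k).Adj (.inr a) (.inr b) ↔ a ≠ b ∧ (b = a + k ∨ a = b + k) := by
  simp [GP]

end GPAdjacency

section Columns

variable {α : Type*}

theorem zmodTwo_eq_zero_or_eq_one (i : ZMod 2) : i = 0 ∨ i = 1 := by
  revert i
  decide

def columnsEquiv (σ : Equiv.Perm α) : ZMod 2 × α ≃ α ⊕ α where
  toFun x := if x.1 = 0 then .inl x.2 else .inr (σ x.2)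
  invFun := Sum.elim (fun a => (0, a)) (fun a => (1, σ.symm a))
  left_inv := by
    rintro ⟨i, a⟩
    rcases zmodTwo_eq_zero_or_eq_one i with rfl | rfl
    · rfl
    · simp [show (1 : ZMod 2) ≠ 0 by decide]
  right_inv := by rintro (a | a) <;> simp

@[simp]
theorem columnsEquiv_zero (σ : Equiv.Perm α) (a : α) : columnsEquiv σ (0, a) = .inl a := rfl

@[simp]
theorem columnsEquiv_one (σ : Equiv.Perm α) (a : α) : columnsEquiv σ (1, a) = .inr (σ a) := rfl

end Columns

def htgTwoIsoGP (n : ℕ) [NeZero n] (hn : 4 ∣ n) : HTG 2 n (n / 2) ≃g GP n (n / 2 - 1) where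
  toEquiv := columnsEquiv
    (twistPerm (natCast_half_add_self (dvd_trans ⟨2, rfl⟩ hn)) (natCast_half_mul_self hn))
  map_rel_iff' := by
    have h2 : 2 ∣ n := dvd_trans ⟨2, rfl⟩ hn
    have hh := natCast_half_add_self h2
    have hsq := natCast_half_mul_self hn
    have hk : ((n / 2 - 1 : ℕ) : ZMod n) = (n / 2 : ℕ) - 1 :=
      Nat.cast_pred (by have := NeZero.ne n; omega)
    rintro ⟨i, a⟩ ⟨j, b⟩
    rcases zmodTwo_eq_zero_or_eq_one i with rfl | rfl <;>
      rcases zmodTwo_eq_zero_or_eq_one j with rfl | rfl <;>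
      simp only [columnsEquiv_zero, columnsEquiv_one, twistPerm_apply]
    · rw [GP_adj_inl_inl, HTG_two_adj_zero_zero]
    · rw [GP_adj_inl_inr, HTG_two_adj_zero_one, eq_twist_half_iff h2]
    · rw [adj_comm, (HTG 2 n _).adj_comm, GP_adj_inl_inr, HTG_two_adj_zero_one,
        eq_twist_half_iff h2]
    · rw [GP_adj_inr_inr, HTG_two_adj_one_one, (twist_injective hh hsq).ne_iff, hk,
        twist_eq_twist_add_iff hh hsq, twist_eq_twist_add_iff hh hsq, or_comm]

theorem HTG2_iso_GP_general (n : ℕ) [NeZero n] (hn : n % 4 = 0) :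
    Nonempty (HTG 2 n (n / 2) ≃g GP n (n / 2 - 1)) :=
  ⟨htgTwoIsoGP n (Nat.dvd_of_mod_eq_zero hn)⟩

/-- For `n ≡ 0 (mod 4)` (`n ≥ 4`), the honeycomb toroidal graph `HTG(2, n, n/2)` is
isomorphic to the generalized Petersen graph `GP(n, n/2 - 1)`. -/
theorem HTG2_iso_GP (n : ℕ) [NeZero n] (hn4 : 4 ≤ n) (hn : n % 4 = 0) :
    Nonempty (HTG 2 n (n / 2) ≃g GP n (n / 2 - 1)) :=
  HTG2_iso_GP_general n hn
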